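/- arXiv:0910.3713 — 3 statements merged into one kernel-verified Lean document; each statement's English description precedes it below -/
import Mathlib

section
/- In the quantum generator constructed for noisy parity, starting from the basis state (0,0,0), for every time t the post-measurement state |ψ_t⟩ equals ρ·e_{(j,k,ℓ)} for some basis vector e_{(j,k,ℓ)} and some ρ ∈ ℂ with |ρ| = 1. -/
/-! Every column of `qgU` is supported on two basis states with different measurement outcomes,
so projecting `U (ρ e_i)` onto either outcome class leaves a multiple of a single basis vector;
the observed outcome has positive probability, so the multiple is nonzero, and normalizing it
gives a coefficient of modulus one. Induction on `t` from `ψ 0 = e_(0,0,0)`. -/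

open Classical in
/-- The unitary of the noisy-parity quantum generator. -/
noncomputable def qgU (n : ℕ) (S : Finset ℕ) (η : ℝ) :
    Matrix (Fin (n + 1) × Bool × Bool) (Fin (n + 1) × Bool × Bool) ℂ :=
  fun r c =>
    let j : Fin (n + 1) := c.1
    let k : Bool := c.2.1
    let l : Bool := c.2.2
    if (j : ℕ) < n then
      if (j : ℕ) + 1 ∉ S then
        if r = (j + 1, k, l) then ((Real.sqrt 2 : ℝ) : ℂ)⁻¹
        else if r = (j + 1, k, !l) then Complex.I * ((Real.sqrt 2 : ℝ) : ℂ)⁻¹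
        else 0
      else if (j : ℕ) + 1 = sInf (S : Set ℕ) then
        if r = (j + 1, k, l) then ((Real.sqrt 2 : ℝ) : ℂ)⁻¹
        else if r = (j + 1, !k, l) then Complex.I * ((Real.sqrt 2 : ℝ) : ℂ)⁻¹
        else 0
      else
        if r = (j + 1, xor k l, k) then ((Real.sqrt 2 : ℝ) : ℂ)⁻¹
        else if r = (j + 1, !(xor k l), k) then Complex.I * ((Real.sqrt 2 : ℝ) : ℂ)⁻¹
        else 0
    else
      if r = (j + 1, k, l) then ((Real.sqrt (1 - η) : ℝ) : ℂ)
      else if r = (j + 1, !k, l) then Complex.I * ((Real.sqrt η : ℝ) : ℂ)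
      else 0

open Classical in
/-- The measurement partition of the basis states into the two outcome classes:
for `j ∉ {0} ∪ S`, state `(j,k,b)` has outcome `b`; for `j ∈ S \ {min S}`,
state `(j, ℓ⊕b, ℓ)` has outcome `b`; otherwise `(j,b,ℓ)` has outcome `b`. -/
noncomputable def qgMeas (n : ℕ) (S : Finset ℕ) : Fin (n + 1) × Bool × Bool → Bool :=
  fun p =>
    let j : Fin (n + 1) := p.1
    let k : Bool := p.2.1
    let l : Bool := p.2.2
    if (j : ℕ) ≠ 0 ∧ (j : ℕ) ∉ S then l
    else if (j : ℕ) ∈ S ∧ (j : ℕ) ≠ sInf (S : Set ℕ) then xor k l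
    else k

open Classical in
/-- The projection onto the span of basis states with measurement outcome `o`. -/
noncomputable def qgProj (n : ℕ) (S : Finset ℕ) (o : Bool)
    (v : Fin (n + 1) × Bool × Bool → ℂ) : Fin (n + 1) × Bool × Bool → ℂ :=
  fun i => if qgMeas n S i = o then v i else 0

section BasisVectors

variable {ι M : Type*} [DecidableEq ι]

theorem ite_ite_eq_single_add_single [AddZeroClass M] {r₁ r₂ : ι} (h : r₁ ≠ r₂) (a b : M) :
    (fun r => if r = r₁ then a else if r = r₂ then b else 0) =
      (Pi.single r₁ a + Pi.single r₂ b : ι → M) := by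
  funext r
  by_cases h₁ : r = r₁
  · subst h₁; simp [h]
  · split_ifs <;> simp_all

theorem ite_single_eq_ite {β : Type*} [DecidableEq β] [Zero M] (m : ι → β) (o : β) (r : ι)
    (c : M) :
    (fun i => if m i = o then (Pi.single r c : ι → M) i else 0) =
      if m r = o then Pi.single r c else 0 := by
  funext i
  by_cases hi : i = r
  · subst hi; split_ifs <;> rfl
  · split_ifs <;> simp [hi]

theorem exists_ite_single_add_single_eq_single [AddZeroClass M] {m : ι → Bool} {r₁ r₂ : ι}
    (h : m r₁ ≠ m r₂) (o : Bool) (a b : M) :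
    ∃ r c, (fun i => if m i = o then (Pi.single r₁ a + Pi.single r₂ b : ι → M) i else 0) =
      Pi.single r c := by
  have hsplit : (fun i => if m i = o then (Pi.single r₁ a + Pi.single r₂ b : ι → M) i else 0) =
      (if m r₁ = o then Pi.single r₁ a else 0) + (if m r₂ = o then Pi.single r₂ b else 0) := by
    rw [← ite_single_eq_ite, ← ite_single_eq_ite]
    funext i
    simp only [Pi.add_apply]
    split_ifs <;> simp
  by_cases h₁ : m r₁ = o
  · exact ⟨r₁, a, by rw [hsplit, if_pos h₁, if_neg (h₁ ▸ h.symm), add_zero]⟩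
  · have h₂ : m r₂ = o := by revert h h₁; cases m r₁ <;> cases m r₂ <;> cases o <;> simp
    exact ⟨r₂, b, by rw [hsplit, if_neg h₁, if_pos h₂, zero_add]⟩

theorem sqrt_sum_normSq_single [Fintype ι] (r : ι) (c : ℂ) :
    Real.sqrt (∑ i, Complex.normSq ((Pi.single r c : ι → ℂ) i)) = ‖c‖ := by
  simp [Pi.single_apply, apply_ite Complex.normSq, Complex.norm_def]

theorem inv_sqrt_sum_normSq_smul_single [Fintype ι] (r : ι) (c : ℂ) :
    ((Real.sqrt (∑ i, Complex.normSq ((Pi.single r c : ι → ℂ) i)) : ℝ) : ℂ)⁻¹ • Pi.single r c =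
      Pi.single r ((‖c‖ : ℂ)⁻¹ • c) := by
  rw [sqrt_sum_normSq_single, Pi.single_smul]

end BasisVectors

section NoisyParity

variable {n : ℕ} {S : Finset ℕ}

theorem qgMeas_of_notMem {p : Fin (n + 1) × Bool × Bool} (h0 : (p.1 : ℕ) ≠ 0)
    (hS : (p.1 : ℕ) ∉ S) : qgMeas n S p = p.2.2 := by
  simp [qgMeas, h0, hS]

theorem qgMeas_of_mem_of_eq_sInf {p : Fin (n + 1) × Bool × Bool} (hS : (p.1 : ℕ) ∈ S)
    (h : (p.1 : ℕ) = sInf (S : Set ℕ)) : qgMeas n S p = p.2.1 := by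
  rw [h] at hS
  simp [qgMeas, hS, h]

theorem qgMeas_of_mem_of_ne_sInf {p : Fin (n + 1) × Bool × Bool} (hS : (p.1 : ℕ) ∈ S)
    (h : (p.1 : ℕ) ≠ sInf (S : Set ℕ)) : qgMeas n S p = xor p.2.1 p.2.2 := by
  have h0 : (p.1 : ℕ) ≠ 0 := fun h0 => h (h0 ▸ (Nat.sInf_eq_zero.2 (.inl (h0 ▸ hS))).symm)
  simp [qgMeas, h0, hS, h]

theorem qgMeas_of_val_eq_zero {p : Fin (n + 1) × Bool × Bool} (h0 : (p.1 : ℕ) = 0) :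
    qgMeas n S p = p.2.1 := by
  by_cases hS : 0 ∈ S
  · exact qgMeas_of_mem_of_eq_sInf (h0 ▸ hS) (h0 ▸ (Nat.sInf_eq_zero.2 (.inl hS)).symm)
  · simp [qgMeas, h0, hS]

theorem exists_qgU_col_eq_single_add_single (η : ℝ) (c : Fin (n + 1) × Bool × Bool) :
    ∃ r₁ r₂ a b, qgMeas n S r₁ ≠ qgMeas n S r₂ ∧
      (qgU n S η).col c = Pi.single r₁ a + Pi.single r₂ b := by
  suffices ∃ r₁ r₂ a b, qgMeas n S r₁ ≠ qgMeas n S r₂ ∧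
      ∀ r, qgU n S η r c = if r = r₁ then a else if r = r₂ then b else 0 by
    obtain ⟨r₁, r₂, a, b, hmeas, hcol⟩ := this
    refine ⟨r₁, r₂, a, b, hmeas, ?_⟩
    rw [← ite_ite_eq_single_add_single (ne_of_apply_ne _ hmeas)]
    exact funext hcol
  obtain ⟨j, k, l⟩ := c
  by_cases hjn : (j : ℕ) < n
  · have hval : ((j + 1 : Fin (n + 1)) : ℕ) = j + 1 :=
      Fin.val_add_one_of_lt (Fin.lt_last_iff_ne_last.2 fun h => by simp [h] at hjn)
    by_cases hS : (j : ℕ) + 1 ∈ S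
    · by_cases hmin : (j : ℕ) + 1 = sInf (S : Set ℕ)
      · have hmin' : sInf (S : Set ℕ) ∈ S := hmin ▸ hS
        refine ⟨(j + 1, k, l), (j + 1, !k, l), _, Complex.I * _, ?_,
          fun r => by simp [qgU, hjn, hmin, hmin']; rfl⟩
        rw [qgMeas_of_mem_of_eq_sInf, qgMeas_of_mem_of_eq_sInf] <;> simp [hval, hmin, hmin']
      · refine ⟨(j + 1, xor k l, k), (j + 1, !(xor k l), k), _, Complex.I * _, ?_,
          fun r => by simp [qgU, hjn, hS, hmin]; rfl⟩
        rw [qgMeas_of_mem_of_ne_sInf, qgMeas_of_mem_of_ne_sInf] <;> simp [hval, hS, hmin]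
    · refine ⟨(j + 1, k, l), (j + 1, k, !l), _, Complex.I * _, ?_,
        fun r => by simp [qgU, hjn, hS]; rfl⟩
      rw [qgMeas_of_notMem, qgMeas_of_notMem] <;> simp [hval, hS]
  · have hval : ((j + 1 : Fin (n + 1)) : ℕ) = 0 := by
      rw [show j = Fin.last n from Fin.ext (by simp; omega), Fin.last_add_one, Fin.val_zero]
    refine ⟨(j + 1, k, l), (j + 1, !k, l), _, Complex.I * _, ?_,
      fun r => by simp [qgU, hjn]; rfl⟩
    rw [qgMeas_of_val_eq_zero hval, qgMeas_of_val_eq_zero hval]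
    simp

theorem exists_qgProj_qgU_mulVec_single (η : ℝ) (o : Bool) (i₀ : Fin (n + 1) × Bool × Bool)
    (ρ : ℂ) : ∃ i₁ c, qgProj n S o ((qgU n S η).mulVec (Pi.single i₀ ρ)) = Pi.single i₁ c := by
  obtain ⟨r₁, r₂, a, b, hmeas, hcol⟩ := exists_qgU_col_eq_single_add_single η i₀
  rw [Matrix.mulVec_single, hcol, smul_add, ← Pi.single_smul, ← Pi.single_smul]
  exact exists_ite_single_add_single_eq_single hmeas o _ _


end NoisyParity

open Classical in
theorem stmt10_general (n : ℕ) (S : Finset ℕ) (η : ℝ)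
    (x : ℕ → Bool) (ψ : ℕ → (Fin (n + 1) × Bool × Bool → ℂ))
    (hψ0 : ψ 0 = fun i => if i = (0, false, false) then 1 else 0)
    (hnz : ∀ t, qgProj n S (x (t + 1)) ((qgU n S η).mulVec (ψ t)) ≠ 0)
    (hstep : ∀ t, ψ (t + 1) =
      ((Real.sqrt (∑ i, Complex.normSq
        (qgProj n S (x (t + 1)) ((qgU n S η).mulVec (ψ t)) i)) : ℝ) : ℂ)⁻¹ •
        qgProj n S (x (t + 1)) ((qgU n S η).mulVec (ψ t))) :
    ∀ t, ∃ (ρ : ℂ) (i₀ : Fin (n + 1) × Bool × Bool), ‖ρ‖ = 1 ∧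
      ψ t = fun i => if i = i₀ then ρ else 0 := by
  have single_eq (i₀ : Fin (n + 1) × Bool × Bool) (ρ : ℂ) :
      Pi.single i₀ ρ = fun i => if i = i₀ then ρ else 0 :=
    funext (Pi.single_apply i₀ ρ)
  suffices ∀ t, ∃ (ρ : ℂ) (i₀ : Fin (n + 1) × Bool × Bool), ‖ρ‖ = 1 ∧ ψ t = Pi.single i₀ ρ by
    simpa only [single_eq] using this
  intro t
  induction t with
  | zero => exact ⟨1, (0, false, false), norm_one, by rw [hψ0, single_eq]⟩
  | succ t ih =>
    obtain ⟨ρ, i₀, -, hψ⟩ := ih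
    obtain ⟨i₁, c, hproj⟩ := exists_qgProj_qgU_mulVec_single η (x (t + 1)) i₀ ρ
    have hc : c ≠ 0 := by
      rintro rfl
      exact hnz t (by rw [hψ, hproj, Pi.single_zero])
    refine ⟨_, i₁, norm_smul_inv_norm (𝕜 := ℂ) hc, ?_⟩
    rw [hstep t, hψ, hproj]
    exact inv_sqrt_sum_normSq_smul_single i₁ c

open Classical in
/-- In the noisy-parity quantum generator started at basis state `(0,0,0)`, every
post-measurement state `ψ_t` is of the form `ρ · e_{(j,k,ℓ)}` with `|ρ| = 1`. -/
theorem stmt10 (n : ℕ) (hn : 1 ≤ n) (S : Finset ℕ) (hS : S.Nonempty)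
    (hSsub : S ⊆ Finset.Icc 1 n) (η : ℝ) (hη : 0 < η) (hη' : η < 1 / 2)
    (x : ℕ → Bool) (ψ : ℕ → (Fin (n + 1) × Bool × Bool → ℂ))
    (hψ0 : ψ 0 = fun i => if i = (0, false, false) then 1 else 0)
    (hnz : ∀ t, qgProj n S (x (t + 1)) ((qgU n S η).mulVec (ψ t)) ≠ 0)
    (hstep : ∀ t, ψ (t + 1) =
      ((Real.sqrt (∑ i, Complex.normSq
        (qgProj n S (x (t + 1)) ((qgU n S η).mulVec (ψ t)) i)) : ℝ) : ℂ)⁻¹ •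
        qgProj n S (x (t + 1)) ((qgU n S η).mulVec (ψ t))) :
    ∀ t, ∃ (ρ : ℂ) (i₀ : Fin (n + 1) × Bool × Bool), ‖ρ‖ = 1 ∧
      ψ t = fun i => if i = i₀ then ρ else 0 :=
  stmt10_general n S η x ψ hψ0 hnz hstep
end

section
/- Let P_S be the noisy parity distribution on {0,1}^{n+1} with noise rate η ∈ (0,1/2), and let E be a probability distribution on {0,1}^{n+1} with full support. If the fraction of x ∈ {0,1}^n with E(x, f_S(x)) ≤ E(x, ¬f_S(x)) exceeds ε, then KL(P_S||E) > ε·(1 − H(η)). -/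
/-!
Group the outcomes by `x` and write `u = 2⁻ⁿ`, `a = E(x, f_S x)`, `b = E(x, ¬f_S x)`. Comparing
`E(x, ·)` with the reference split `((1 - η)(a + b), η(a + b))` (the log-sum inequality) shows that
the pair contributes at least `u log (u / (a + b))` to the divergence; when `a ≤ b`, comparing
instead with the uniform split `((a + b)/2, (a + b)/2)` gains the extra `u (log 2 - H(η))`.
Both comparisons rest on `p log (a' / a) ≥ p - p a / a'`. Finally
`∑ₓ u log (u / (a + b)) ≥ ∑ₓ u - ∑ₓ (a + b) = 0` by Gibbs' inequality.
-/

open Real Finset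

section LogInequalities

variable {p q a b a' b' : ℝ}

lemma sub_mul_div_le_mul_log_div_sub_mul_log_div (hp : 0 < p) (ha : 0 < a) (ha' : 0 < a') :
    p - p * a / a' ≤ p * log (p / a) - p * log (p / a') := by
  have h := one_sub_inv_le_log_of_pos (div_pos ha' ha)
  rw [inv_div, log_div ha'.ne' ha.ne'] at h
  rw [log_div hp.ne' ha.ne', log_div hp.ne' ha'.ne']
  calc p - p * a / a' = p * (1 - a / a') := by ring
    _ ≤ p * (log a' - log a) := mul_le_mul_of_nonneg_left h hp.le
    _ = _ := by ring

lemma sub_le_mul_log_div (hp : 0 < p) (ha : 0 < a) : p - a ≤ p * log (p / a) := by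
  simpa [hp.ne'] using sub_mul_div_le_mul_log_div_sub_mul_log_div hp ha hp

lemma add_mul_log_div_le_add_mul_log_div (hp : 0 < p) (hq : 0 < q) (ha : 0 < a) (hb : 0 < b)
    (ha' : 0 < a') (hb' : 0 < b') (h : p * a / a' + q * b / b' ≤ p + q) :
    p * log (p / a') + q * log (q / b') ≤ p * log (p / a) + q * log (q / b) := by
  linarith [sub_mul_div_le_mul_log_div_sub_mul_log_div hp ha ha',
    sub_mul_div_le_mul_log_div_sub_mul_log_div hq hb hb']

end LogInequalities

lemma mul_log_div_add_ite_le {η u a b : ℝ} (hη : 0 < η) (hη' : η ≤ 1 / 2) (hu : 0 < u)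
    (ha : 0 < a) (hb : 0 < b) :
    u * log (u / (a + b)) + (if a ≤ b then u * (log 2 - binEntropy η) else 0) ≤
      (1 - η) * u * log ((1 - η) * u / a) + η * u * log (η * u / b) := by
  have hη1 : 0 < 1 - η := by linarith
  have hc : 0 < a + b := by positivity
  split_ifs with hab
  · have hcmp := add_mul_log_div_le_add_mul_log_div (a' := (a + b) / 2) (b' := (a + b) / 2)
      (mul_pos hη1 hu) (mul_pos hη hu) ha hb (by positivity) (by positivity) (by
        rw [← add_div, div_le_iff₀ (by positivity)]
        nlinarith [mul_nonneg (mul_nonneg hu.le (sub_nonneg.2 hη')) (sub_nonneg.2 hab)])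
    have hlog : ∀ t, 0 < t →
        log (t * u / ((a + b) / 2)) = log t + log u + log 2 - log (a + b) := by
      intro t ht
      rw [div_div_eq_mul_div, log_div (by positivity) hc.ne', log_mul (by positivity) two_ne_zero,
        log_mul ht.ne' hu.ne']
    rw [hlog _ hη1, hlog _ hη] at hcmp
    convert hcmp using 1
    rw [binEntropy, log_div hu.ne' hc.ne', log_inv, log_inv]
    ring
  · have hcmp := add_mul_log_div_le_add_mul_log_div (a' := (1 - η) * (a + b)) (b' := η * (a + b))
      (mul_pos hη1 hu) (mul_pos hη hu) ha hb (by positivity) (by positivity) (by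
        field_simp
        linarith)
    convert hcmp using 1
    rw [mul_div_mul_left _ _ hη1.ne', mul_div_mul_left _ _ hη.ne']
    ring

lemma Fintype.sum_prod_bool_eq_sum_label {α M : Type*} [Fintype α] [AddCommMonoid M]
    (f : α → Bool) (g : α × Bool → M) :
    ∑ ω, g ω = ∑ x, (g (x, f x) + g (x, !f x)) := by
  rw [Fintype.sum_prod_type]
  refine Finset.sum_congr rfl fun x _ => ?_
  cases f x <;> simp [add_comm]

noncomputable def noisyLabelDist {α : Type*} [Fintype α] (f : α → Bool) (η : ℝ) (ω : α × Bool) :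
    ℝ :=
  if ω.2 = f ω.1 then (1 - η) / Fintype.card α else η / Fintype.card α

section NoisyLabel

variable {α : Type*} [Fintype α] (f : α → Bool)

@[simp] lemma noisyLabelDist_label (η : ℝ) (x : α) :
    noisyLabelDist f η (x, f x) = (1 - η) * (Fintype.card α : ℝ)⁻¹ := by
  simp [noisyLabelDist, div_eq_mul_inv]

@[simp] lemma noisyLabelDist_not_label (η : ℝ) (x : α) :
    noisyLabelDist f η (x, !f x) = η * (Fintype.card α : ℝ)⁻¹ := by
  simp [noisyLabelDist, div_eq_mul_inv]

theorem card_div_mul_le_sum_mul_log_div {η : ℝ} (hη : 0 < η) (hη' : η ≤ 1 / 2) (E : α × Bool → ℝ)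
    (hEpos : ∀ ω, 0 < E ω) (hEsum : ∑ ω, E ω = 1) :
    (#{x | E (x, f x) ≤ E (x, !f x)} : ℝ) / Fintype.card α * (log 2 - binEntropy η) ≤
      ∑ ω, noisyLabelDist f η ω * log (noisyLabelDist f η ω / E ω) := by
  set u : ℝ := (Fintype.card α : ℝ)⁻¹
  rw [Fintype.sum_prod_bool_eq_sum_label f] at hEsum ⊢
  have hcard : (Fintype.card α : ℝ) ≠ 0 := by
    rintro h
    simp [Fintype.card_eq_zero_iff.1 (by exact_mod_cast h)] at hEsum
  have hu : 0 < u := by positivity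
  have hgibbs : 0 ≤ ∑ x, u * log (u / (E (x, f x) + E (x, !f x))) := by
    calc (0 : ℝ) = ∑ x, (u - (E (x, f x) + E (x, !f x))) := by
          rw [sum_sub_distrib, hEsum, sum_const, card_univ, nsmul_eq_mul, mul_inv_cancel₀ hcard,
            sub_self]
      _ ≤ _ := sum_le_sum fun x _ => sub_le_mul_log_div hu (add_pos (hEpos _) (hEpos _))
  calc (#{x | E (x, f x) ≤ E (x, !f x)} : ℝ) / Fintype.card α * (log 2 - binEntropy η)
      = ∑ x, if E (x, f x) ≤ E (x, !f x) then u * (log 2 - binEntropy η) else 0 := by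
        rw [sum_ite, sum_const_zero, add_zero, sum_const, nsmul_eq_mul]; ring
    _ ≤ ∑ x, (u * log (u / (E (x, f x) + E (x, !f x))) +
          if E (x, f x) ≤ E (x, !f x) then u * (log 2 - binEntropy η) else 0) := by
        rw [sum_add_distrib]; linarith
    _ ≤ _ := sum_le_sum fun x _ => by
        simpa using mul_log_div_add_ite_le hη hη' hu (hEpos _) (hEpos _)

end NoisyLabel

theorem stmt14_general (n : ℕ) (η ε : ℝ) (hη : 0 < η) (hη' : η < 1 / 2)
    (fS : (Fin n → Bool) → Bool)
    (PS : ((Fin n → Bool) × Bool) → ℝ)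
    (hPS : ∀ ω, PS ω = if ω.2 = fS ω.1 then (1 - η) / 2 ^ n else η / 2 ^ n)
    (E : ((Fin n → Bool) × Bool) → ℝ) (hEpos : ∀ ω, 0 < E ω) (hEsum : ∑ ω, E ω = 1)
    (hbad : ε < ((Finset.univ.filter
      fun x : Fin n → Bool => E (x, fS x) ≤ E (x, !(fS x))).card : ℝ) / 2 ^ n) :
    ε * (1 - (-(η * Real.logb 2 η) - (1 - η) * Real.logb 2 (1 - η))) <
      ∑ ω, PS ω * Real.logb 2 (PS ω / E ω) := by
  have hPS' : PS = noisyLabelDist fS η := by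
    funext ω
    simp [hPS, noisyLabelDist]
  have hentropy : -(η * logb 2 η) - (1 - η) * logb 2 (1 - η) = binEntropy η / log 2 := by
    simp only [logb, binEntropy, log_inv]
    ring
  have hKL : ∑ ω, PS ω * logb 2 (PS ω / E ω) = (∑ ω, PS ω * log (PS ω / E ω)) / log 2 := by
    simp only [logb, sum_div, mul_div_assoc]
  have hgap : 0 < log 2 - binEntropy η := sub_pos.2 (binEntropy_lt_log_two.2 (by linarith))
  rw [hentropy, hKL, lt_div_iff₀ (log_pos one_lt_two), hPS']
  calc ε * (1 - binEntropy η / log 2) * log 2 = ε * (log 2 - binEntropy η) := by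
        field_simp
    _ < _ := mul_lt_mul_of_pos_right hbad hgap
    _ ≤ _ := by
      simpa using card_div_mul_le_sum_mul_log_div fS hη hη'.le E hEpos hEsum

/-- If `P_S` is the noisy parity distribution on `{0,1}^{n+1}` with noise rate `η ∈ (0,1/2)`
and `E` is a full-support distribution such that the fraction of `x` with
`E(x, f_S(x)) ≤ E(x, ¬f_S(x))` exceeds `ε`, then `KL(P_S‖E) > ε·(1 - H(η))` (base-2 logs). -/
theorem stmt14 (n : ℕ) (S : Finset (Fin n)) (η ε : ℝ) (hη : 0 < η) (hη' : η < 1 / 2)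
    (hε : 0 ≤ ε)
    (fS : (Fin n → Bool) → Bool)
    (hfS : ∀ x, fS x = decide (Odd ((S.filter fun i => x i = true).card)))
    (PS : ((Fin n → Bool) × Bool) → ℝ)
    (hPS : ∀ ω, PS ω = if ω.2 = fS ω.1 then (1 - η) / 2 ^ n else η / 2 ^ n)
    (E : ((Fin n → Bool) × Bool) → ℝ) (hEpos : ∀ ω, 0 < E ω) (hEsum : ∑ ω, E ω = 1)
    (hbad : ε < ((Finset.univ.filter
      fun x : Fin n → Bool => E (x, fS x) ≤ E (x, !(fS x))).card : ℝ) / 2 ^ n) :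
    ε * (1 - (-(η * Real.logb 2 η) - (1 - η) * Real.logb 2 (1 - η))) <
      ∑ ω, PS ω * Real.logb 2 (PS ω / E ω) :=
  stmt14_general n η ε hη hη' fS PS hPS E hEpos hEsum hbad
end

section
/- The (n+1)-symbol output distribution of the noisy-parity quantum generator, started at basis state (0,0,0), equals the noisy parity distribution: the first n output symbols are uniform on {0,1}^n and the (n+1)-st symbol equals ⊕_{i∈S}x_i with probability 1−η and its complement with probability η, independently. -/
/-!
Every column of `qgU` has exactly two nonzero entries, and they sit on basis states with opposite
measurement outcomes. So, starting from a basis state, the measured state after each step is again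
a multiple of a single basis state, whose squared amplitude is halved at each of the first `n`
steps and multiplied by `1 - η` or `η` at the last one. The second coordinate of that basis state
is the parity of `x` on `S ∩ {1, …, t}`: it is left alone outside `S`, set to `x_t` at `min S`
(where it is still `0`), and XORed with `x_t` at the other elements of `S`. The last step keeps
it with amplitude `√(1 - η)` and flips it with amplitude `i √η`.
-/

open scoped Matrix

section TwoEntryColumn

variable {ι R : Type*} [Fintype ι] [DecidableEq ι]

theorem mulVec_single_apply [NonUnitalNonAssocSemiring R] (U : Matrix ι ι R) (p : ι) (c : R)
    (r : ι) : (U *ᵥ Pi.single p c) r = U r p * c :=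
  dotProduct_single _ _ _

theorem outcome_mulVec_single [NonUnitalNonAssocSemiring R] (m : ι → Bool) (U : Matrix ι ι R)
    {p r₀ r₁ : ι} {a₀ a₁ : R}
    (hU : ∀ r, U r p = if r = r₀ then a₀ else if r = r₁ then a₁ else 0) (hm : m r₁ = !m r₀)
    (o : Bool) (c : R) :
    (fun r => if m r = o then (U *ᵥ Pi.single p c) r else 0) =
      if m r₀ = o then Pi.single r₀ (a₀ * c) else Pi.single r₁ (a₁ * c) := by
  have hne : r₁ ≠ r₀ := fun h => by simp [h] at hm
  funext r
  by_cases h₀ : r = r₀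
  · subst h₀; split_ifs <;> simp_all [mulVec_single_apply]
  · by_cases h₁ : r = r₁
    · subst h₁; split_ifs <;> simp_all [mulVec_single_apply]
    · split_ifs <;> simp [mulVec_single_apply, hU, h₀, h₁]

end TwoEntryColumn

theorem sum_normSq_single {ι : Type*} [Fintype ι] [DecidableEq ι] (p : ι) (z : ℂ) :
    ∑ i, Complex.normSq ((Pi.single p z : ι → ℂ) i) = Complex.normSq z := by
  simp [Pi.single_apply, apply_ite Complex.normSq]

theorem normSq_inv_sqrt_two : Complex.normSq ((Real.sqrt 2 : ℝ) : ℂ)⁻¹ = 1 / 2 := by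
  simp [Complex.normSq_ofReal]

theorem normSq_I_mul_inv_sqrt_two :
    Complex.normSq (Complex.I * ((Real.sqrt 2 : ℝ) : ℂ)⁻¹) = 1 / 2 := by
  simp [Complex.normSq_ofReal]

theorem normSq_last_amplitude {η : ℝ} (hη₀ : 0 ≤ η) (hη₁ : η ≤ 1) (o k : Bool) :
    Complex.normSq
        (if o = k then ((Real.sqrt (1 - η) : ℝ) : ℂ) else Complex.I * ((Real.sqrt η : ℝ) : ℂ)) =
      if o = k then 1 - η else η := by
  split_ifs
  · rw [Complex.normSq_ofReal, Real.mul_self_sqrt (by linarith)]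
  · rw [Complex.normSq_mul, Complex.normSq_I, Complex.normSq_ofReal, one_mul,
      Real.mul_self_sqrt hη₀]

section PrefixParity

def prefixParity (T : Finset ℕ) (t : ℕ) : Bool :=
  decide (Odd (T ∩ Finset.Icc 1 t).card)

variable (T : Finset ℕ)

@[simp]
theorem prefixParity_zero : prefixParity T 0 = false := by
  simp [prefixParity]

theorem prefixParity_succ (t : ℕ) :
    prefixParity T (t + 1) = xor (decide (t + 1 ∈ T)) (prefixParity T t) := by
  unfold prefixParity
  rw [← Finset.insert_Icc_right_eq_Icc_add_one (by omega)]
  by_cases h : t + 1 ∈ T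
  · rw [Finset.inter_insert_of_mem h, Finset.card_insert_of_notMem (by simp)]
    simp [h, Nat.odd_add_one, -Nat.not_odd_iff_even]
  · rw [Finset.inter_insert_of_notMem h]
    simp [h]

theorem prefixParity_eq_false_of_forall_lt {t : ℕ} (h : ∀ i ∈ T, t < i) :
    prefixParity T t = false := by
  have : T ∩ Finset.Icc 1 t = ∅ := by
    ext i
    simp only [Finset.mem_inter, Finset.mem_Icc, Finset.notMem_empty, iff_false]
    exact fun ⟨hi, _, hit⟩ => absurd (h i hi) (by omega)
  simp [prefixParity, this]

theorem prefixParity_of_subset_Icc {n : ℕ} (h : T ⊆ Finset.Icc 1 n) :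
    prefixParity T n = decide (Odd T.card) := by
  rw [prefixParity, Finset.inter_eq_left.mpr h]

end PrefixParity

section Generator

variable {n : ℕ} (S : Finset ℕ) (η : ℝ)

theorem qgProj_qgU_single_of_lt {t : ℕ} (ht : t < n) {k : Bool}
    (hk : t + 1 = sInf (S : Set ℕ) → k = false) (l o : Bool) (c : ℂ) :
    ∃ l' a, Complex.normSq a = 1 / 2 ∧
      qgProj n S o (qgU n S η *ᵥ Pi.single (⟨t, by omega⟩, k, l) c) =
        Pi.single (⟨t + 1, by omega⟩, xor (decide (t + 1 ∈ S) && o) k, l') (a * c) := by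
  have hsucc : (⟨t, by omega⟩ : Fin (n + 1)) + 1 = ⟨t + 1, by omega⟩ :=
    Fin.ext (by simp [Fin.val_add]; omega)
  have collapse := fun r₀ r₁ hU hm => outcome_mulVec_single (qgMeas n S) (qgU n S η)
    (p := (⟨t, Nat.lt_succ_of_lt ht⟩, k, l)) (r₀ := r₀) (r₁ := r₁)
    (a₀ := ((Real.sqrt 2 : ℝ) : ℂ)⁻¹) (a₁ := Complex.I * ((Real.sqrt 2 : ℝ) : ℂ)⁻¹) hU hm o c
  unfold qgProj
  by_cases hS : t + 1 ∈ S
  · by_cases hmin : t + 1 = sInf (S : Set ℕ)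
    · obtain rfl := hk hmin
      have hm : qgMeas n S (⟨t + 1, by omega⟩, false, l) = false := by
        simp [qgMeas, hS, eq_true hmin]
      rw [collapse (⟨t + 1, by omega⟩, false, l) (⟨t + 1, by omega⟩, true, l)
        (fun r => by simp [qgU, ht, hsucc, hS, eq_true hmin])
        (by simp [qgMeas, hS, eq_true hmin]), hm]
      cases o
      · exact ⟨l, _, normSq_inv_sqrt_two, by simp⟩
      · exact ⟨l, _, normSq_I_mul_inv_sqrt_two, by simp [hS]⟩
    · have hm : qgMeas n S (⟨t + 1, by omega⟩, xor k l, k) = l := by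
        cases k <;> simp [qgMeas, hS, hmin]
      rw [collapse (⟨t + 1, by omega⟩, xor k l, k) (⟨t + 1, by omega⟩, !(xor k l), k)
        (fun r => by simp [qgU, ht, hsucc, hS, hmin]) (by simp [qgMeas, hS, hmin]), hm]
      split_ifs with h
      · exact ⟨k, _, normSq_inv_sqrt_two, by subst h; simp [hS, Bool.xor_comm]⟩
      · exact ⟨k, _, normSq_I_mul_inv_sqrt_two, by
          rw [Bool.eq_not.mpr (Ne.symm h)]; simp [hS, Bool.xor_comm]⟩
  · have hm : qgMeas n S (⟨t + 1, by omega⟩, k, l) = l := by simp [qgMeas, hS]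
    rw [collapse (⟨t + 1, by omega⟩, k, l) (⟨t + 1, by omega⟩, k, !l)
      (fun r => by simp [qgU, ht, hsucc, hS]) (by simp [qgMeas, hS]), hm]
    split_ifs
    · exact ⟨l, _, normSq_inv_sqrt_two, by simp [hS]⟩
    · exact ⟨!l, _, normSq_I_mul_inv_sqrt_two, by simp [hS]⟩

theorem qgProj_qgU_single_last (h0 : 0 ∉ S) (k l o : Bool) (c : ℂ) :
    qgProj n S o (qgU n S η *ᵥ Pi.single (Fin.last n, k, l) c) =
      Pi.single (0, o, l)
        ((if o = k then ((Real.sqrt (1 - η) : ℝ) : ℂ) else Complex.I * ((Real.sqrt η : ℝ) : ℂ)) * c) := by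
  have hm : qgMeas n S (0, k, l) = k := by simp [qgMeas, h0]
  unfold qgProj
  rw [outcome_mulVec_single (qgMeas n S) _ (a₀ := ((Real.sqrt (1 - η) : ℝ) : ℂ))
    (a₁ := Complex.I * ((Real.sqrt η : ℝ) : ℂ)) (r₀ := (0, k, l)) (r₁ := (0, !k, l))
    (fun r => by simp [qgU]) (by simp [qgMeas, h0]), hm]
  cases o <;> cases k <;> simp

theorem qgStates_eq_single {x : ℕ → Bool} {φ : ℕ → Fin (n + 1) × Bool × Bool → ℂ}
    (hφ0 : φ 0 = Pi.single (0, false, false) 1)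
    (hφ : ∀ t, φ (t + 1) = qgProj n S (x (t + 1)) (qgU n S η *ᵥ φ t)) :
    ∀ t (ht : t ≤ n), ∃ l c, Complex.normSq c = (1 / 2) ^ t ∧
      φ t = Pi.single (⟨t, by omega⟩, prefixParity (S.filter (x · = true)) t, l) c := by
  intro t
  induction t with
  | zero => exact fun _ => ⟨false, 1, by simp, by simpa using hφ0⟩
  | succ t ih =>
    intro ht
    obtain ⟨l, c, hc, hφt⟩ := ih (by omega)
    have hk : t + 1 = sInf (S : Set ℕ) → prefixParity (S.filter (x · = true)) t = false := by
      refine fun hmin => prefixParity_eq_false_of_forall_lt _ fun i hi => ?_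
      have := Nat.sInf_le (show i ∈ (S : Set ℕ) from (Finset.mem_filter.mp hi).1)
      omega
    obtain ⟨l', a, ha, hstep⟩ := qgProj_qgU_single_of_lt S η ht hk l (x (t + 1)) c
    refine ⟨l', a * c, by rw [Complex.normSq_mul, ha, hc, pow_succ, mul_comm], ?_⟩
    rw [hφ, hφt, hstep, prefixParity_succ]
    simp [Finset.mem_filter]

end Generator

open Classical in
theorem stmt19_general (n : ℕ) (S : Finset ℕ)
    (hSsub : S ⊆ Finset.Icc 1 n) (η : ℝ) (hη : 0 < η) (hη' : η < 1 / 2)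
    (x : ℕ → Bool) (φ : ℕ → (Fin (n + 1) × Bool × Bool → ℂ))
    (hφ0 : φ 0 = fun i => if i = (0, false, false) then 1 else 0)
    (hφ : ∀ t, φ (t + 1) = qgProj n S (x (t + 1)) ((qgU n S η).mulVec (φ t))) :
    ∑ i, Complex.normSq (φ (n + 1) i) =
      (if x (n + 1) = decide (Odd ((S.filter fun i => x i = true).card))
        then 1 - η else η) / 2 ^ n := by
  have hφ0' : φ 0 = Pi.single (0, false, false) 1 :=
    hφ0.trans (funext fun i => by simp [Pi.single_apply])
  obtain ⟨l, c, hc, hφn⟩ := qgStates_eq_single S η hφ0' hφ n le_rfl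
  have h0 : 0 ∉ S := fun h => by simpa using hSsub h
  have hparity : prefixParity (S.filter (x · = true)) n =
      decide (Odd (S.filter fun i => x i = true).card) :=
    prefixParity_of_subset_Icc _ ((Finset.filter_subset _ _).trans hSsub)
  rw [hφ, hφn, ← hparity, show (⟨n, by omega⟩ : Fin (n + 1)) = Fin.last n from rfl,
    qgProj_qgU_single_last S η h0, sum_normSq_single, Complex.normSq_mul,
    normSq_last_amplitude hη.le (by linarith), hc,
    one_div, inv_pow, div_eq_mul_inv]

open Classical in
open Classical in
/-- The `(n+1)`-symbol output distribution of the noisy-parity quantum generator, started at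
basis state `(0,0,0)`, is exactly the noisy parity distribution: the probability
`‖M_{x_{n+1}} U ⋯ M_{x_1} U ψ₀‖²` of the output string `x₁,…,x_{n+1}` equals `(1-η)/2^n`
when `x_{n+1} = ⊕_{i∈S} x_i`, and `η/2^n` otherwise. -/
theorem stmt19 (n : ℕ) (hn : 1 ≤ n) (S : Finset ℕ) (hS : S.Nonempty)
    (hSsub : S ⊆ Finset.Icc 1 n) (η : ℝ) (hη : 0 < η) (hη' : η < 1 / 2)
    (x : ℕ → Bool) (φ : ℕ → (Fin (n + 1) × Bool × Bool → ℂ))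
    (hφ0 : φ 0 = fun i => if i = (0, false, false) then 1 else 0)
    (hφ : ∀ t, φ (t + 1) = qgProj n S (x (t + 1)) ((qgU n S η).mulVec (φ t))) :
    ∑ i, Complex.normSq (φ (n + 1) i) =
      (if x (n + 1) = decide (Odd ((S.filter fun i => x i = true).card))
        then 1 - η else η) / 2 ^ n :=
  stmt19_general n S hSsub η hη hη' x φ hφ0 hφ
end
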